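/- Let m, n, q be positive odd integers. Then the series Σ_{k=1}^{∞} F_{2nk+mnq} / ( Π_{j=0}^{m} F_{2nk+2jnq} ) converges, and its sum equals (1 / L_{mnq}) · Σ_{k=1}^{q} 1 / ( Π_{j=0}^{m−1} F_{2nk+2jnq} ). -/

import Mathlib

/-!
Binet's formula gives `L_a F_{x+a} = F_{x+2a} + (-1)^a F_x`. For odd `a = mnq` and `x = 2nk`,
the last factor `F_{x+2a}` of `F_x F_{x+2nq} ⋯ F_{x+2mnq}` therefore exceeds the first one by
`L_a F_{x+a}`, so the `k`-th summand is `L_a⁻¹ (g k - g (k + q))` with `g k` the reciprocal of the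
product of the first `m` factors. The series telescopes with period `q`, and `g k → 0` leaves
`L_a⁻¹ (g 1 + ⋯ + g q)`.
-/

open Filter Topology

/-- The Lucas numbers: `L 0 = 2`, `L 1 = 1`, `L (n+2) = L (n+1) + L n`. -/
def lucas : ℕ → ℕ
  | 0 => 2
  | 1 => 1
  | n + 2 => lucas (n + 1) + lucas n

open Finset Real goldenRatio

theorem lucas_pos (a : ℕ) : 0 < lucas a := by
  induction a using lucas.induct with
  | case1 | case2 => simp [lucas]
  | case3 n _ ih => simp only [lucas]; omega

theorem coe_lucas_eq (a : ℕ) : (lucas a : ℝ) = φ ^ a + ψ ^ a := by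
  induction a using lucas.induct with
  | case1 => norm_num [lucas]
  | case2 => simp [lucas]
  | case3 n ih₁ ih₂ =>
    simp only [lucas, Nat.cast_add, ih₁, ih₂]
    rw [pow_add φ n 2, pow_add ψ n 2, goldenRatio_sq, goldenConj_sq]
    ring

theorem lucas_mul_fib_add (a x : ℕ) :
    (lucas a * Nat.fib (x + a) : ℝ) = Nat.fib (x + 2 * a) + (-1) ^ a * Nat.fib x := by
  have expand (u v : ℝ) : (u ^ a + v ^ a) * (u ^ (x + a) - v ^ (x + a)) =
      u ^ (x + 2 * a) - v ^ (x + 2 * a) + (u * v) ^ a * (u ^ x - v ^ x) := by ring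
  rw [coe_lucas_eq, coe_fib_eq, coe_fib_eq, coe_fib_eq, mul_div_assoc', expand,
    goldenRatio_mul_goldenConj]
  ring

theorem tendsto_fib_atTop : Tendsto Nat.fib atTop atTop :=
  tendsto_atTop_atTop.2 fun b => ⟨b + 1, fun x hx => by have := Nat.le_fib_add_one x; omega⟩

def fibProd (m s x : ℕ) : ℕ := ∏ j ∈ range m, Nat.fib (x + j * s)

theorem fibProd_pos (m s : ℕ) {x : ℕ} (hx : 0 < x) : 0 < fibProd m s x :=
  prod_pos fun _ _ => Nat.fib_pos.2 (by omega)

theorem fibProd_succ (m s x : ℕ) : fibProd (m + 1) s x = fibProd m s x * Nat.fib (x + m * s) :=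
  prod_range_succ _ _

theorem fibProd_succ' (m s x : ℕ) : fibProd (m + 1) s x = fibProd m s (x + s) * Nat.fib x := by
  simp only [fibProd, prod_range_succ', add_mul, one_mul, zero_mul, add_zero, add_comm (_ * s) s,
    add_assoc]

theorem fib_le_fibProd {m : ℕ} (hm : 0 < m) (s : ℕ) {x : ℕ} (hx : 0 < x) :
    Nat.fib x ≤ fibProd m s x := by
  unfold fibProd
  simpa using single_le_prod' (f := fun j => Nat.fib (x + j * s))
    (fun j _ => Nat.fib_pos.2 (by omega)) (mem_range.2 hm)

theorem tendsto_fibProd_atTop {m : ℕ} (hm : 0 < m) (s : ℕ) :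
    Tendsto (fibProd m s) atTop atTop :=
  tendsto_atTop_mono' atTop ((eventually_gt_atTop 0).mono fun _ hx => fib_le_fibProd hm s hx)
    tendsto_fib_atTop

theorem fib_div_fibProd_succ {m s a x : ℕ} (hs : m * s = 2 * a) (ha : Odd a) (hx : 0 < x) :
    (Nat.fib (x + a) : ℝ) / fibProd (m + 1) s x =
      (lucas a : ℝ)⁻¹ * ((fibProd m s x : ℝ)⁻¹ - (fibProd m s (x + s) : ℝ)⁻¹) := by
  have hlast : (Nat.fib (x + m * s) : ℝ) = lucas a * Nat.fib (x + a) + Nat.fib x := by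
    rw [hs, lucas_mul_fib_add, ha.neg_one_pow]; ring
  have hends := congrArg (Nat.cast (R := ℝ)) ((fibProd_succ m s x).symm.trans (fibProd_succ' m s x))
  push_cast at hends
  have h₁ : (fibProd m s x : ℝ) ≠ 0 := by exact_mod_cast (fibProd_pos m s hx).ne'
  have h₂ : (fibProd m s (x + s) : ℝ) ≠ 0 := by exact_mod_cast (fibProd_pos m s (by omega)).ne'
  have hL : (lucas a : ℝ) ≠ 0 := by exact_mod_cast (lucas_pos a).ne'
  have hF : (Nat.fib (x + m * s) : ℝ) ≠ 0 := by exact_mod_cast (Nat.fib_pos.2 (by omega)).ne'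
  rw [fibProd_succ, Nat.cast_mul]
  field_simp
  linear_combination (-(fibProd m s (x + s) : ℝ)) * hlast + hends

theorem sum_range_sub_shift {G : Type*} [AddCommGroup G] (f : ℕ → G) (q N : ℕ) :
    ∑ k ∈ range N, (f k - f (k + q)) = ∑ k ∈ range q, f k - ∑ k ∈ range q, f (N + k) := by
  induction N with
  | zero => simp
  | succ N ih =>
    have h := (sum_range_succ (fun k => f (N + k)) q).symm.trans
      (sum_range_succ' (fun k => f (N + k)) q)
    simp only [add_zero, ← add_assoc] at h
    simp_rw [sum_range_succ, ih, add_right_comm N 1, eq_sub_of_add_eq h.symm]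
    abel

theorem sum_Icc_one_eq_sum_range {M : Type*} [AddCommMonoid M] (f : ℕ → M) (N : ℕ) :
    ∑ k ∈ Icc 1 N, f k = ∑ k ∈ range N, f (k + 1) := by
  rw [range_eq_Ico, sum_Ico_add', Ico_add_one_right_eq_Icc]

theorem tendsto_sum_Icc_sub_shift {G : Type*} [AddCommGroup G] [TopologicalSpace G]
    [IsTopologicalAddGroup G] {f : ℕ → G} (hf : Tendsto f atTop (𝓝 0)) (q : ℕ) :
    Tendsto (fun N => ∑ k ∈ Icc 1 N, (f k - f (k + q))) atTop (𝓝 (∑ k ∈ Icc 1 q, f k)) := by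
  have htail : Tendsto (fun N => ∑ k ∈ range q, f (N + (k + 1))) atTop (𝓝 0) := by
    simpa using tendsto_finsetSum (range q) fun k _ => hf.comp (tendsto_add_atTop_nat (k + 1))
  simp_rw [sum_Icc_one_eq_sum_range, add_right_comm _ 1 q]
  simp_rw [sum_range_sub_shift (fun k => f (k + 1)), add_assoc]
  simpa using tendsto_const_nhds.sub htail

theorem stmt_16_general (m n q : ℕ) (hm : Odd m) (hn : Odd n) (hq : Odd q)
    (hm' : 0 < m) (hn' : 0 < n) :
    Tendsto (fun N => ∑ k ∈ Finset.Icc 1 N,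
        (Nat.fib (2 * n * k + m * n * q) : ℝ) /
          ∏ j ∈ Finset.range (m + 1), (Nat.fib (2 * n * k + 2 * j * n * q) : ℝ))
      atTop
      (𝓝 ((1 / (lucas (m * n * q) : ℝ)) *
        ∑ k ∈ Finset.Icc 1 q,
          (1 : ℝ) / ∏ j ∈ Finset.range m, (Nat.fib (2 * n * k + 2 * j * n * q) : ℝ))) := by
  have hprod (l k : ℕ) : ∏ j ∈ range l, (Nat.fib (2 * n * k + 2 * j * n * q) : ℝ) =
      fibProd l (2 * n * q) (2 * n * k) := by
    push_cast [fibProd]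
    exact prod_congr rfl fun j _ => by ring_nf
  set g : ℕ → ℝ := fun k => (fibProd m (2 * n * q) (2 * n * k) : ℝ)⁻¹
  have hg : Tendsto g atTop (𝓝 0) :=
    (tendsto_natCast_atTop_atTop.comp ((tendsto_fibProd_atTop hm' _).comp
      (tendsto_id.const_mul_atTop' (by omega)))).inv_tendsto_atTop
  have hlim := (tendsto_sum_Icc_sub_shift hg q).const_mul (lucas (m * n * q) : ℝ)⁻¹
  simp only [hprod, one_div]
  refine hlim.congr fun N => ?_
  rw [mul_sum]
  refine sum_congr rfl fun k hk => ?_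
  have hx : 0 < 2 * n * k := by have := (mem_Icc.1 hk).1; positivity
  rw [fib_div_fibProd_succ (by ring) ((hm.mul hn).mul hq) hx]
  simp only [g, mul_add]

/-- Theorem (`m`, `n`, `q` odd):
`Σ_{k=1}^{∞} F_{2nk+mnq} / (Π_{j=0}^{m} F_{2nk+2jnq})
  = (1/L_{mnq}) Σ_{k=1}^{q} 1/(Π_{j=0}^{m−1} F_{2nk+2jnq})`. -/
theorem stmt_16 (m n q : ℕ) (hm : Odd m) (hn : Odd n) (hq : Odd q)
    (hm' : 0 < m) (hn' : 0 < n) (hq' : 0 < q) :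
    Tendsto (fun N => ∑ k ∈ Finset.Icc 1 N,
        (Nat.fib (2 * n * k + m * n * q) : ℝ) /
          ∏ j ∈ Finset.range (m + 1), (Nat.fib (2 * n * k + 2 * j * n * q) : ℝ))
      atTop
      (𝓝 ((1 / (lucas (m * n * q) : ℝ)) *
        ∑ k ∈ Finset.Icc 1 q,
          (1 : ℝ) / ∏ j ∈ Finset.range m, (Nat.fib (2 * n * k + 2 * j * n * q) : ℝ))) :=
  stmt_16_general m n q hm hn hq hm' hn'
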